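/- Let v_1 ≤ v_2 ≤ v_3 be integers, each at least 2. Then 1/2 < 1/v_1 + 1/v_2 + 1/v_3 < 1 (as rational numbers) holds if and only if one of the following occurs: (v_1 = 2, v_2 = 3, v_3 ≥ 7); (v_1 = 2, v_2 = 4, v_3 ≥ 5); (v_1 = 2, v_2 ≥ 5); (v_1 = 3, v_2 = 3, v_3 ≥ 4); (v_1 = 3, 4 ≤ v_2 ≤ 6); (v_1 = 3, v_2 = 7, v_3 ≤ 41); (v_1 = 3, v_2 = 8, v_3 ≤ 23); (v_1 = 3, v_2 = 9, v_3 ≤ 17); (v_1 = 3, v_2 = 10, v_3 ≤ 14); (v_1 = 3, v_2 = 11, v_3 ≤ 13); (v_1 = 4, v_2 = 4); (v_1 = 4, v_2 = 5, v_3 ≤ 19); (v_1 = 4, v_2 = 6, v_3 ≤ 11); (v_1 = 4, v_2 = 7, v_3 ≤ 9); (v_1 = 5, v_2 = 5, v_3 ≤ 9); (v_1 = 5, v_2 = 6, v_3 ≤ 7). -/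
import Mathlib


set_option maxHeartbeats 1000000 in
theorem stmt_2 (v₁ v₂ v₃ : ℤ) (h1 : 2 ≤ v₁) (h12 : v₁ ≤ v₂) (h23 : v₂ ≤ v₃) :
    ((1 : ℚ) / 2 < 1 / (v₁ : ℚ) + 1 / (v₂ : ℚ) + 1 / (v₃ : ℚ) ∧
      1 / (v₁ : ℚ) + 1 / (v₂ : ℚ) + 1 / (v₃ : ℚ) < 1) ↔
    ((v₁ = 2 ∧ v₂ = 3 ∧ 7 ≤ v₃) ∨
     (v₁ = 2 ∧ v₂ = 4 ∧ 5 ≤ v₃) ∨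
     (v₁ = 2 ∧ 5 ≤ v₂) ∨
     (v₁ = 3 ∧ v₂ = 3 ∧ 4 ≤ v₃) ∨
     (v₁ = 3 ∧ 4 ≤ v₂ ∧ v₂ ≤ 6) ∨
     (v₁ = 3 ∧ v₂ = 7 ∧ v₃ ≤ 41) ∨
     (v₁ = 3 ∧ v₂ = 8 ∧ v₃ ≤ 23) ∨
     (v₁ = 3 ∧ v₂ = 9 ∧ v₃ ≤ 17) ∨
     (v₁ = 3 ∧ v₂ = 10 ∧ v₃ ≤ 14) ∨
     (v₁ = 3 ∧ v₂ = 11 ∧ v₃ ≤ 13) ∨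
     (v₁ = 4 ∧ v₂ = 4) ∨
     (v₁ = 4 ∧ v₂ = 5 ∧ v₃ ≤ 19) ∨
     (v₁ = 4 ∧ v₂ = 6 ∧ v₃ ≤ 11) ∨
     (v₁ = 4 ∧ v₂ = 7 ∧ v₃ ≤ 9) ∨
     (v₁ = 5 ∧ v₂ = 5 ∧ v₃ ≤ 9) ∨
     (v₁ = 5 ∧ v₂ = 6 ∧ v₃ ≤ 7)) := by
  have h2 : 2 ≤ v₂ := le_trans h1 h12
  have h3 : 2 ≤ v₃ := le_trans h2 h23
  have hq1 : (0:ℚ) < (v₁:ℚ) := by exact_mod_cast lt_of_lt_of_le (by norm_num) h1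
  have hq2 : (0:ℚ) < (v₂:ℚ) := by exact_mod_cast lt_of_lt_of_le (by norm_num) h2
  have hq3 : (0:ℚ) < (v₃:ℚ) := by exact_mod_cast lt_of_lt_of_le (by norm_num) h3
  have hsum : 1 / (v₁ : ℚ) + 1 / (v₂ : ℚ) + 1 / (v₃ : ℚ)
      = (((v₂*v₃ + v₁*v₃ + v₁*v₂ : ℤ) : ℚ)) / (((v₁*v₂*v₃ : ℤ) : ℚ)) := by
    push_cast
    field_simp
  have hD : (0:ℚ) < ((v₁*v₂*v₃ : ℤ) : ℚ) := by push_cast; positivity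
  have key : ((1 : ℚ) / 2 < 1 / (v₁ : ℚ) + 1 / (v₂ : ℚ) + 1 / (v₃ : ℚ) ∧
      1 / (v₁ : ℚ) + 1 / (v₂ : ℚ) + 1 / (v₃ : ℚ) < 1) ↔
      (v₁*v₂*v₃ < 2*(v₂*v₃ + v₁*v₃ + v₁*v₂) ∧ v₂*v₃ + v₁*v₃ + v₁*v₂ < v₁*v₂*v₃) := by
    rw [hsum, div_lt_one hD, div_lt_div_iff₀ (by norm_num) hD]
    constructor
    · rintro ⟨hL, hR⟩
      refine ⟨?_, by exact_mod_cast hR⟩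
      have h : ((v₁*v₂*v₃ : ℤ):ℚ) < ((2*(v₂*v₃+v₁*v₃+v₁*v₂) : ℤ):ℚ) := by
        push_cast at hL ⊢; linarith
      exact_mod_cast h
    · rintro ⟨hL, hR⟩
      refine ⟨?_, by exact_mod_cast hR⟩
      have h : ((v₁*v₂*v₃:ℤ):ℚ) < ((2*(v₂*v₃+v₁*v₃+v₁*v₂):ℤ):ℚ) := by exact_mod_cast hL
      push_cast at h ⊢; linarith
  rw [key]
  by_cases ha : v₁ ≤ 5
  · interval_cases v₁
    · -- v₁ = 2
      by_cases hb : v₂ ≤ 4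
      · interval_cases v₂ <;> norm_num <;> omega
      · push_neg at hb
        constructor
        · intro _; exact Or.inr (Or.inr (Or.inl ⟨rfl, by omega⟩))
        · intro _
          constructor
          · nlinarith
          · nlinarith
    · -- v₁ = 3
      by_cases hb : v₂ ≤ 11
      · interval_cases v₂ <;> norm_num <;> omega
      · push_neg at hb
        constructor
        · intro hh; exfalso; nlinarith [hh.1]
        · intro hh; exfalso; omega
    · -- v₁ = 4
      by_cases hb : v₂ ≤ 7
      · interval_cases v₂ <;> norm_num <;> omega
      · push_neg at hb
        constructor
        · intro hh; exfalso; nlinarith [hh.1]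
        · intro hh; exfalso; omega
    · -- v₁ = 5
      by_cases hb : v₂ ≤ 6
      · interval_cases v₂ <;> norm_num <;> omega
      · push_neg at hb
        constructor
        · intro hh; exfalso; nlinarith [hh.1]
        · intro hh; exfalso; omega
  · push_neg at ha
    constructor
    · intro hh
      exfalso
      nlinarith [hh.1, mul_nonneg (mul_nonneg (by omega : (0:ℤ) ≤ v₁-6) (by omega : (0:ℤ) ≤ v₂)) (by omega : (0:ℤ) ≤ v₃),
        mul_nonneg (by omega : (0:ℤ) ≤ v₂-v₁) (by omega : (0:ℤ) ≤ v₃),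
        mul_nonneg (by omega : (0:ℤ) ≤ v₃-v₂) (by omega : (0:ℤ) ≤ v₂),
        mul_nonneg (by omega : (0:ℤ) ≤ v₂-v₁) (by omega : (0:ℤ) ≤ v₂)]
    · intro hh; exfalso; omega
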